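/- Reversibility through a non-atomic reversing option: let G be a guaranteed scoring game with Left option A that is reversible through B ∈ A^R (i.e., B ≼ G); if B^L is nonempty, then G ∼ ⟨(G^L \ {A}) ∪ B^L | G^R⟩. -/

import Mathlib

/-- A scoring game: `la`/`ra` are the atom values (relevant when the
corresponding option list is empty), `L`/`R` the Left and Right options. -/
inductive SG : Type
  | mk (la ra : ℝ) (L R : List SG) : SG

namespace SG

theorem sizeOf_lt_of_mem {g : SG} {l : List SG} (h : g ∈ l) : sizeOf g < sizeOf l :=
  List.sizeOf_lt_of_mem h

noncomputable instance : DecidableEq SG := Classical.decEq _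

def la : SG → ℝ | mk a _ _ _ => a
def ra : SG → ℝ | mk _ b _ _ => b
def L : SG → List SG | mk _ _ l _ => l
def R : SG → List SG | mk _ _ _ r => r

/-- The list of atom values occurring in atomic followers of a game. -/
def atomList : SG → List ℝ
  | mk a b ls rs =>
    (if ls.isEmpty then [a] else (ls.attach.map (fun x => atomList x.1)).flatten)
    ++ (if rs.isEmpty then [b] else (rs.attach.map (fun x => atomList x.1)).flatten)
decreasing_by all_goals (simp only [SG.mk.sizeOf_spec]; (first | (have := sizeOf_lt_of_mem x.2) | (have := sizeOf_lt_of_mem (by assumption : x ∈ _))); omega)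

/-- The guaranteed condition. -/
def Guaranteed : SG → Prop
  | mk a b ls rs =>
    (∀ x ∈ ls, Guaranteed x) ∧ (∀ x ∈ rs, Guaranteed x) ∧
    (ls = [] → ∀ s ∈ (mk a b ls rs).atomList, a ≤ s) ∧
    (rs = [] → ∀ s ∈ (mk a b ls rs).atomList, s ≤ b)
decreasing_by all_goals (simp only [SG.mk.sizeOf_spec]; (first | (have := sizeOf_lt_of_mem x.2) | (have := sizeOf_lt_of_mem (by assumption : x ∈ _))); omega)

/-- Disjunctive sum. -/
noncomputable def add : SG → SG → SG
  | mk a1 b1 L1 R1, mk a2 b2 L2 R2 =>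
    mk (a1 + a2) (b1 + b2)
      (L1.attach.map (fun x => add x.1 (mk a2 b2 L2 R2))
        ++ L2.attach.map (fun x => add (mk a1 b1 L1 R1) x.1))
      (R1.attach.map (fun x => add x.1 (mk a2 b2 L2 R2))
        ++ R2.attach.map (fun x => add (mk a1 b1 L1 R1) x.1))
termination_by g h => sizeOf g + sizeOf h
decreasing_by all_goals (simp only [SG.mk.sizeOf_spec]; (first | (have := sizeOf_lt_of_mem x.2) | (have := sizeOf_lt_of_mem (by assumption : x ∈ _))); omega)

/-- Left- and Right-stops (as a pair). -/
noncomputable def stops : SG → ℝ × ℝ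
  | mk a b ls rs =>
    (if ls.isEmpty then a else ((ls.attach.map (fun x => (stops x.1).2)).maximum.unbotD 0),
     if rs.isEmpty then b else ((rs.attach.map (fun x => (stops x.1).1)).minimum.untopD 0))
decreasing_by all_goals (simp only [SG.mk.sizeOf_spec]; (first | (have := sizeOf_lt_of_mem x.2) | (have := sizeOf_lt_of_mem (by assumption : x ∈ _))); omega)

noncomputable def Ls (g : SG) : ℝ := g.stops.1
noncomputable def Rs (g : SG) : ℝ := g.stops.2

/-- The conjugate: interchange Left and Right and negate atoms. -/
noncomputable def conj : SG → SG
  | mk a b ls rs =>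
    mk (-b) (-a) (rs.attach.map (fun x => conj x.1)) (ls.attach.map (fun x => conj x.1))
decreasing_by all_goals (simp only [SG.mk.sizeOf_spec]; (first | (have := sizeOf_lt_of_mem x.2) | (have := sizeOf_lt_of_mem (by assumption : x ∈ _))); omega)

/-- The game ⟨∅^s | ∅^s⟩ of a real number `s`. -/
def num (s : ℝ) : SG := mk s s [] []

/-- The zero game ⟨∅^0 | ∅^0⟩. -/
def zero : SG := num 0

/-- Waiting moves: the image of the Normal-play integer `n`. -/
def wait : ℕ → SG
  | 0 => zero
  | n + 1 => mk 0 0 [wait n] []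

/-- Birthday: the depth of the game tree. -/
def birthday : SG → ℕ
  | mk _ _ ls rs =>
    max ((ls.attach.map (fun x => birthday x.1 + 1)).maximum.unbotD 0)
        ((rs.attach.map (fun x => birthday x.1 + 1)).maximum.unbotD 0)
decreasing_by all_goals (simp only [SG.mk.sizeOf_spec]; (first | (have := sizeOf_lt_of_mem x.2) | (have := sizeOf_lt_of_mem (by assumption : x ∈ _))); omega)

/-- `Ge G H` is the order `G ≽ H`. -/
def Ge (G H : SG) : Prop :=
  ∀ X : SG, X.Guaranteed → Ls (G.add X) ≥ Ls (H.add X) ∧ Rs (G.add X) ≥ Rs (H.add X)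

/-- Equivalence `G ∼ H`. -/
def Equiv (G H : SG) : Prop := Ge G H ∧ Ge H G

/-- Right's pass-allowed Left-stop `L̲s(G) = min_n Ls(G - n̂)`. -/
noncomputable def lsU (G : SG) : ℝ := ⨅ n : ℕ, Ls (G.add (wait n).conj)

/-- Left's pass-allowed Right-stop `R̄s(G) = max_n Rs(G + n̂)`. -/
noncomputable def rsO (G : SG) : ℝ := ⨆ n : ℕ, Rs (G.add (wait n))

/-- `L̄s(G) = max_n Ls(G + n̂)`. -/
noncomputable def lsO (G : SG) : ℝ := ⨆ n : ℕ, Ls (G.add (wait n))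

/-- `R̲s(G) = min_n Rs(G + n̂)`. -/
noncomputable def rsU (G : SG) : ℝ := ⨅ n : ℕ, Rs (G.add (wait n))

/-- Identity of games: same tree structure (up to reordering of options),
with identical atoms at atomic positions. -/
def Ident : SG → SG → Prop
  | mk a1 b1 L1 R1, mk a2 b2 L2 R2 =>
    (L1 = [] ↔ L2 = []) ∧ (L1 = [] → a1 = a2) ∧
    (R1 = [] ↔ R2 = []) ∧ (R1 = [] → b1 = b2) ∧
    (∀ x ∈ L1, ∃ y : {z // z ∈ L2}, Ident x y.1) ∧
    (∀ y ∈ L2, ∃ x : {z // z ∈ L1}, Ident x.1 y) ∧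
    (∀ x ∈ R1, ∃ y : {z // z ∈ R2}, Ident x y.1) ∧
    (∀ y ∈ R2, ∃ x : {z // z ∈ R1}, Ident x.1 y)
termination_by g h => sizeOf g
decreasing_by all_goals (simp only [SG.mk.sizeOf_spec]; (first | (have := sizeOf_lt_of_mem x.2) | (have := sizeOf_lt_of_mem (by assumption : x ∈ _))); omega)

/-- `Linked H G`: `H` is linked to `G` (by some guaranteed `T`). -/
def Linked (H G : SG) : Prop :=
  ∃ T : SG, T.Guaranteed ∧ Ls (H.add T) < 0 ∧ 0 < Rs (G.add T)

/-- Replace every atom of `G` by `∅^x`. -/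
def subst (v : ℝ) : SG → SG
  | mk _ _ ls rs =>
    mk v v (ls.attach.map (fun x => subst v x.1)) (rs.attach.map (fun x => subst v x.1))
decreasing_by all_goals (simp only [SG.mk.sizeOf_spec]; (first | (have := sizeOf_lt_of_mem x.2) | (have := sizeOf_lt_of_mem (by assumption : x ∈ _))); omega)

/-- The maximum atom value in `G`. -/
noncomputable def maxAtom (G : SG) : ℝ := G.atomList.maximum.unbotD 0

/-- The minimum atom value in `G`. -/
noncomputable def minAtom (G : SG) : ℝ := G.atomList.minimum.untopD 0

/-!
Write `G'` for `G` with `A` bypassed through `B`. Since `≽` compares the stops of sums with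
guaranteed games, it suffices to show that `G + X` and `G' + X` have the same stops for every
guaranteed `X`, by induction on `X`; Right's options are untouched, so only the Left-stops need
care. A new option `B' + X` with `B' ∈ B^L` is worth at most `Ls (B + X) ≤ Ls (G + X)`, since
`B ≼ G`. Conversely the lost option `A + X` is worth at most `Ls (B + X)`, as Right may answer
with `B + X`; and `Ls (B + X) ≤ Ls (G' + X)`, because every Left option of `B + X` is one of
`G' + X` or is dominated through `B ≼ G` and the induction hypothesis. Here `B^L ≠ ∅` matters:
otherwise `B + X` could be atomic for Left and its stop an atom value unrelated to `G'`.
-/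

@[simp] theorem L_mk (a b : ℝ) (l r : List SG) : (mk a b l r).L = l := rfl
@[simp] theorem R_mk (a b : ℝ) (l r : List SG) : (mk a b l r).R = r := rfl
@[simp] theorem la_mk (a b : ℝ) (l r : List SG) : (mk a b l r).la = a := rfl
@[simp] theorem ra_mk (a b : ℝ) (l r : List SG) : (mk a b l r).ra = b := rfl

theorem sizeOf_lt_of_mem_L {x g : SG} (h : x ∈ g.L) : sizeOf x < sizeOf g := by
  obtain ⟨a, b, l, r⟩ := g
  have : sizeOf x < sizeOf l := sizeOf_lt_of_mem h
  simp only [mk.sizeOf_spec]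
  omega

theorem sizeOf_lt_of_mem_R {x g : SG} (h : x ∈ g.R) : sizeOf x < sizeOf g := by
  obtain ⟨a, b, l, r⟩ := g
  have : sizeOf x < sizeOf r := sizeOf_lt_of_mem h
  simp only [mk.sizeOf_spec]
  omega

theorem induction_on_options {motive : SG → Prop}
    (ind : ∀ X, (∀ X' ∈ X.L, motive X') → (∀ X' ∈ X.R, motive X') → motive X) (X : SG) :
    motive X :=
  ind X (fun X' _ => induction_on_options ind X') (fun X' _ => induction_on_options ind X')
termination_by sizeOf X
decreasing_by
  · exact sizeOf_lt_of_mem_L ‹_›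
  · exact sizeOf_lt_of_mem_R ‹_›

theorem Guaranteed.of_mem_L {g x : SG} (hg : g.Guaranteed) (hx : x ∈ g.L) : x.Guaranteed := by
  cases g
  rw [Guaranteed] at hg
  exact hg.1 x hx

theorem Guaranteed.of_mem_R {g x : SG} (hg : g.Guaranteed) (hx : x ∈ g.R) : x.Guaranteed := by
  cases g
  rw [Guaranteed] at hg
  exact hg.2.1 x hx

theorem add_eq (g h : SG) :
    g.add h = mk (g.la + h.la) (g.ra + h.ra)
      (g.L.map (·.add h) ++ h.L.map g.add) (g.R.map (·.add h) ++ h.R.map g.add) := by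
  cases g; cases h
  rw [add]
  simp

theorem L_add (g h : SG) : (g.add h).L = g.L.map (·.add h) ++ h.L.map g.add := by
  rw [add_eq, L_mk]

theorem R_add (g h : SG) : (g.add h).R = g.R.map (·.add h) ++ h.R.map g.add := by
  rw [add_eq, R_mk]

theorem ra_add (g h : SG) : (g.add h).ra = g.ra + h.ra := by
  rw [add_eq, ra_mk]

theorem Ls_of_L_ne_nil {g : SG} (hg : g.L ≠ []) : Ls g = (g.L.map Rs).maximum.unbotD 0 := by
  obtain ⟨a, b, l, r⟩ := g
  have hl : l.isEmpty = false := List.isEmpty_eq_false_iff.2 hg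
  simp only [Ls, stops, hl, Bool.false_eq_true, if_false, L_mk]
  exact congrArg (fun m => (List.maximum m).unbotD 0) (List.attach_map_val (f := Rs))

theorem Rs_of_R_ne_nil {g : SG} (hg : g.R ≠ []) : Rs g = (g.R.map Ls).minimum.untopD 0 := by
  obtain ⟨a, b, l, r⟩ := g
  have hr : r.isEmpty = false := List.isEmpty_eq_false_iff.2 hg
  simp only [Rs, stops, hr, Bool.false_eq_true, if_false, R_mk]
  exact congrArg (fun m => (List.minimum m).untopD 0) (List.attach_map_val (f := Ls))

theorem Rs_of_R_eq_nil {g : SG} (hg : g.R = []) : Rs g = g.ra := by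
  cases g
  simp_all [Rs, stops]

theorem Rs_le_Ls_of_mem_L {x g : SG} (hx : x ∈ g.L) : Rs x ≤ Ls g := by
  rw [Ls_of_L_ne_nil (List.ne_nil_of_mem hx)]
  exact WithBot.le_unbotD (List.le_maximum_of_mem' (List.mem_map_of_mem hx))

theorem Ls_le_of_forall {g : SG} {c : ℝ} (hg : g.L ≠ []) (h : ∀ x ∈ g.L, Rs x ≤ c) :
    Ls g ≤ c := by
  rw [Ls_of_L_ne_nil hg,
    WithBot.unbotD_le_iff fun hbot => absurd (List.maximum_eq_bot.1 hbot) (by simpa)]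
  exact List.maximum_le_of_forall_le (by simpa using h)

theorem Rs_le_Ls_of_mem_R {x g : SG} (hx : x ∈ g.R) : Rs g ≤ Ls x := by
  rw [Rs_of_R_ne_nil (List.ne_nil_of_mem hx)]
  exact WithTop.untopD_le (List.minimum_le_of_mem' (List.mem_map_of_mem hx))

theorem le_Rs_of_forall {g : SG} {c : ℝ} (hg : g.R ≠ []) (h : ∀ x ∈ g.R, c ≤ Ls x) :
    c ≤ Rs g := by
  rw [Rs_of_R_ne_nil hg,
    WithTop.le_untopD_iff fun htop => absurd (List.minimum_eq_top.1 htop) (by simpa)]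
  exact List.le_minimum_of_forall_le (by simpa using h)

section Sum

variable {G X : SG}

theorem Rs_add_le_Ls_add_of_mem_L_left {C : SG} (hC : C ∈ G.L) : Rs (C.add X) ≤ Ls (G.add X) :=
  Rs_le_Ls_of_mem_L (by rw [L_add]; exact List.mem_append_left _ (List.mem_map_of_mem hC))

theorem Rs_add_le_Ls_add_of_mem_L_right {X' : SG} (hX' : X' ∈ X.L) :
    Rs (G.add X') ≤ Ls (G.add X) :=
  Rs_le_Ls_of_mem_L (by rw [L_add]; exact List.mem_append_right _ (List.mem_map_of_mem hX'))

theorem Rs_add_le_Ls_add_of_mem_R_left {D : SG} (hD : D ∈ G.R) : Rs (G.add X) ≤ Ls (D.add X) :=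
  Rs_le_Ls_of_mem_R (by rw [R_add]; exact List.mem_append_left _ (List.mem_map_of_mem hD))

theorem Rs_add_le_Ls_add_of_mem_R_right {X' : SG} (hX' : X' ∈ X.R) :
    Rs (G.add X) ≤ Ls (G.add X') :=
  Rs_le_Ls_of_mem_R (by rw [R_add]; exact List.mem_append_right _ (List.mem_map_of_mem hX'))

theorem Ls_add_le {c : ℝ} (hne : G.L ≠ [] ∨ X.L ≠ [])
    (hG : ∀ C ∈ G.L, Rs (C.add X) ≤ c) (hX : ∀ X' ∈ X.L, Rs (G.add X') ≤ c) :
    Ls (G.add X) ≤ c := by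
  refine Ls_le_of_forall (by rw [L_add]; rcases hne with h | h <;> simp [h]) fun y hy => ?_
  rw [L_add] at hy
  rcases List.mem_append.1 hy with hy | hy
  · obtain ⟨C, hC, rfl⟩ := List.mem_map.1 hy
    exact hG C hC
  · obtain ⟨X', hX', rfl⟩ := List.mem_map.1 hy
    exact hX X' hX'

theorem le_Rs_add {c : ℝ} (hne : G.R ≠ [] ∨ X.R ≠ [])
    (hG : ∀ D ∈ G.R, c ≤ Ls (D.add X)) (hX : ∀ X' ∈ X.R, c ≤ Ls (G.add X')) :
    c ≤ Rs (G.add X) := by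
  refine le_Rs_of_forall (by rw [R_add]; rcases hne with h | h <;> simp [h]) fun y hy => ?_
  rw [R_add] at hy
  rcases List.mem_append.1 hy with hy | hy
  · obtain ⟨D, hD, rfl⟩ := List.mem_map.1 hy
    exact hG D hD
  · obtain ⟨X', hX', rfl⟩ := List.mem_map.1 hy
    exact hX X' hX'

theorem Ls_add_le_Ls_add_of_L_subset {H : SG} (hne : G.L ≠ []) (hsub : G.L ⊆ H.L)
    (ih : ∀ X' ∈ X.L, Rs (G.add X') ≤ Rs (H.add X')) : Ls (G.add X) ≤ Ls (H.add X) :=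
  Ls_add_le (.inl hne) (fun _ hC => Rs_add_le_Ls_add_of_mem_L_left (hsub hC))
    fun _ hX' => (ih _ hX').trans (Rs_add_le_Ls_add_of_mem_L_right hX')

theorem Rs_add_le_Rs_add_of_R_eq {H : SG} (hR : G.R = H.R) (hra : G.ra = H.ra)
    (ih : ∀ X' ∈ X.R, Ls (G.add X') ≤ Ls (H.add X')) : Rs (G.add X) ≤ Rs (H.add X) := by
  by_cases hnil : G.R = [] ∧ X.R = []
  · rw [Rs_of_R_eq_nil (by simp [R_add, hnil]), Rs_of_R_eq_nil (by simp [R_add, ← hR, hnil]),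
      ra_add, ra_add, hra]
  · rw [not_and_or] at hnil
    refine le_Rs_add (hR ▸ hnil) (fun _ hD => Rs_add_le_Ls_add_of_mem_R_left (hR ▸ hD))
      fun _ hX' => (Rs_add_le_Ls_add_of_mem_R_right hX').trans (ih _ hX')

end Sum

noncomputable def bypass (G A B : SG) : SG := mk G.la G.ra (B.L ++ G.L.erase A) G.R

section Bypass

variable {G A B X : SG}

theorem Ls_bypass_add_le (hne : B.L ≠ []) (hrev : G.Ge B) (hX : X.Guaranteed)
    (ih : ∀ X' ∈ X.L, Rs ((bypass G A B).add X') ≤ Rs (G.add X')) :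
    Ls ((bypass G A B).add X) ≤ Ls (G.add X) := by
  refine Ls_add_le (.inl (by simp [bypass, hne])) (fun C hC => ?_)
    fun _ hX' => (ih _ hX').trans (Rs_add_le_Ls_add_of_mem_L_right hX')
  rcases List.mem_append.1 hC with hC | hC
  · exact (Rs_add_le_Ls_add_of_mem_L_left hC).trans (hrev X hX).1
  · exact Rs_add_le_Ls_add_of_mem_L_left (List.erase_subset hC)

theorem Ls_add_le_Ls_bypass_add (hA : A ∈ G.L) (hB : B ∈ A.R) (hne : B.L ≠ [])
    (hrev : G.Ge B) (hX : X.Guaranteed)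
    (ih : ∀ X' ∈ X.L, Rs (G.add X') ≤ Rs ((bypass G A B).add X')) :
    Ls (G.add X) ≤ Ls ((bypass G A B).add X) := by
  refine Ls_add_le (.inl (List.ne_nil_of_mem hA)) (fun C hC => ?_)
    fun _ hX' => (ih _ hX').trans (Rs_add_le_Ls_add_of_mem_L_right hX')
  by_cases hCA : C = A
  · subst hCA
    have hBX : Ls (B.add X) ≤ Ls ((bypass G C B).add X) :=
      Ls_add_le_Ls_add_of_L_subset hne (List.subset_append_left _ _)
        fun X' hX' => ((hrev X' (hX.of_mem_L hX')).2).trans (ih X' hX')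
    exact (Rs_add_le_Ls_add_of_mem_R_left hB).trans hBX
  · exact Rs_add_le_Ls_add_of_mem_L_left
      (List.mem_append_right _ ((List.mem_erase_of_ne hCA).2 hC))

theorem stops_add_bypass_eq (hA : A ∈ G.L) (hB : B ∈ A.R) (hne : B.L ≠ []) (hrev : G.Ge B)
    (X : SG) : X.Guaranteed →
      Ls (G.add X) = Ls ((bypass G A B).add X) ∧ Rs (G.add X) = Rs ((bypass G A B).add X) := by
  induction X using induction_on_options with
  | ind X ihL ihR =>
    intro hX
    have ihL X' (hX' : X' ∈ X.L) := ihL X' hX' (hX.of_mem_L hX')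
    have ihR X' (hX' : X' ∈ X.R) := ihR X' hX' (hX.of_mem_R hX')
    exact ⟨le_antisymm
        (Ls_add_le_Ls_bypass_add hA hB hne hrev hX fun X' hX' => (ihL X' hX').2.le)
        (Ls_bypass_add_le hne hrev hX fun X' hX' => (ihL X' hX').2.ge),
      le_antisymm
        (Rs_add_le_Rs_add_of_R_eq rfl rfl fun X' hX' => (ihR X' hX').1.le)
        (Rs_add_le_Rs_add_of_R_eq rfl rfl fun X' hX' => (ihR X' hX').1.ge)⟩

end Bypass

theorem equiv_of_stops_add_eq {G H : SG}
    (h : ∀ X, X.Guaranteed → Ls (G.add X) = Ls (H.add X) ∧ Rs (G.add X) = Rs (H.add X)) :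
    G.Equiv H :=
  ⟨fun X hX => ⟨(h X hX).1.ge, (h X hX).2.ge⟩, fun X hX => ⟨(h X hX).1.le, (h X hX).2.le⟩⟩

theorem reversibility_nonatomic_general (G A B : SG) (hA : A ∈ G.L)
    (hB : B ∈ A.R) (hrev : G.Ge B) (hne : B.L ≠ []) :
    G.Equiv (SG.mk G.la G.ra (B.L ++ G.L.erase A) G.R) :=
  equiv_of_stops_add_eq (stops_add_bypass_eq hA hB hne hrev)

/-- Reversibility 1: bypassing a reversible Left option through a reversing
option with a nonempty replacement set. -/
theorem reversibility_nonatomic (G A B : SG) (hG : G.Guaranteed) (hA : A ∈ G.L)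
    (hB : B ∈ A.R) (hrev : G.Ge B) (hne : B.L ≠ []) :
    G.Equiv (SG.mk G.la G.ra (B.L ++ G.L.erase A) G.R) :=
  reversibility_nonatomic_general G A B hA hB hrev hne

end SG
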